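/- Fix a real parameter α ≠ 0. The vector field J : ℝ³ → ℝ³ defined by J(x,y,z) = (0, −y(1 + z/(2α)), −z) (the Poisson vector common to the modified Lü and Qi systems) satisfies the Jacobi identity J·(∇×J) = 0 at every point of ℝ³, while its curl is not identically zero: there exists a point at which ∇×J ≠ 0. -/

import Mathlib

set_option linter.unusedVariables false

/-- Partial derivative with respect to the first variable. -/
noncomputable def pd1 (f : ℝ → ℝ → ℝ → ℝ) (x y z : ℝ) : ℝ := deriv (fun t => f t y z) x
/-- Partial derivative with respect to the second variable. -/
noncomputable def pd2 (f : ℝ → ℝ → ℝ → ℝ) (x y z : ℝ) : ℝ := deriv (fun t => f x t z) y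
/-- Partial derivative with respect to the third variable. -/
noncomputable def pd3 (f : ℝ → ℝ → ℝ → ℝ) (x y z : ℝ) : ℝ := deriv (fun t => f x y t) z

/-- First component of the Poisson vector common to the modified Lü and Qi systems. -/
noncomputable def J1 (α : ℝ) (x y z : ℝ) : ℝ := 0
/-- Second component. -/
noncomputable def J2 (α : ℝ) (x y z : ℝ) : ℝ := -y * (1 + z / (2 * α))
/-- Third component. -/
noncomputable def J3 (α : ℝ) (x y z : ℝ) : ℝ := -z

/-- For `α ≠ 0`, the Poisson vector `J = (0, −y(1 + z/(2α)), −z)` satisfies the Jacobi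
identity `J·(∇×J) = 0` everywhere, while its curl is not identically zero. -/
theorem stmt_14 (α : ℝ) (hα : α ≠ 0) :
    (∀ x y z : ℝ,
      J1 α x y z * (pd2 (J3 α) x y z - pd3 (J2 α) x y z)
        + J2 α x y z * (pd3 (J1 α) x y z - pd1 (J3 α) x y z)
        + J3 α x y z * (pd1 (J2 α) x y z - pd2 (J1 α) x y z) = 0) ∧
    (∃ x y z : ℝ,
      (pd2 (J3 α) x y z - pd3 (J2 α) x y z,
       pd3 (J1 α) x y z - pd1 (J3 α) x y z,
       pd1 (J2 α) x y z - pd2 (J1 α) x y z) ≠ ((0 : ℝ), (0 : ℝ), (0 : ℝ))) := by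
  have h23 : ∀ x y z : ℝ, pd2 (J3 α) x y z = 0 := by
    intro x y z; simp [pd2, J3]
  have h32 : ∀ x y z : ℝ, pd3 (J2 α) x y z = -y / (2 * α) := by
    intro x y z
    have : (fun t : ℝ => J2 α x y t) = fun t => -y + (-y / (2 * α)) * t := by
      funext t; unfold J2; field_simp; ring
    rw [pd3, this]
    simpa using (((hasDerivAt_id z).const_mul (-y / (2 * α))).const_add (-y)).deriv
  have h31 : ∀ x y z : ℝ, pd3 (J1 α) x y z = 0 := by intro x y z; simp [pd3, J1]
  have h13 : ∀ x y z : ℝ, pd1 (J3 α) x y z = 0 := by intro x y z; simp [pd1, J3]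
  have h12 : ∀ x y z : ℝ, pd1 (J2 α) x y z = 0 := by intro x y z; simp [pd1, J2]
  have h21 : ∀ x y z : ℝ, pd2 (J1 α) x y z = 0 := by intro x y z; simp [pd2, J1]
  constructor
  · intro x y z
    simp [h23, h32, h31, h13, h12, h21, J1, J2, J3]
  · refine ⟨0, 1, 0, ?_⟩
    simp only [h23, h32, h31, h13, h12, h21, Prod.mk.injEq, not_and]
    intro h
    exfalso
    apply hα
    field_simp at h
    simpa using congrArg Prod.fst h
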